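/- Let (𝔈, ε₁, ε₂⁰, ε₂¹) be an hLie₂-algebra concentrated in non-positive degrees (𝔈_k = 0 for k > 0, so that ε₁ vanishes on 𝔈₀). Then for all x, y, z ∈ 𝔈₀: ε₁(ε₂¹(x, ε₂¹(y,z))) = ε₂¹(ε₂⁰(x,y), z) + ε₂¹(y, ε₂⁰(x,z)) − ε₂¹(x, ε₂⁰(y,z) + ε₂⁰(z,y)). -/

import Mathlib

/-! In degree `0` the map `ε₁` vanishes for degree reasons. With `w = ε₂¹(y, z)`, (R2) for `i = 1`
gives `ε₁(ε₂¹(x, w)) = ε₂⁰(x, w) + ε₂⁰(w, x) − ε₂¹(x, ε₁ w)`. Since `ε₂² = 0`, (R4) for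
`(i, j) = (1, 0)` kills `ε₂⁰(w, x)`, (R2) once more computes `ε₁ w = ε₂⁰(y, z) + ε₂⁰(z, y)`, and (R5)
for `(i, j) = (1, 0)` expands `ε₂⁰(x, w)` into the first two terms of the right-hand side. -/

/-- The sign `(-1)^n` for `n : ℤ`, valued in the field `K`. -/
noncomputable def sgn (K : Type*) [Field K] (n : ℤ) : K :=
  ((Int.negOnePow n : ℤ) : K)

/-- An hLie₂-algebra structure on a graded vector space. -/
structure IsHLie2 (K : Type*) [Field K] [CharZero K] {E : Type*}
    [AddCommGroup E] [Module K E] (G : ℤ → Submodule K E)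
    (e1 : E →ₗ[K] E) (e2 : ℤ → E →ₗ[K] E →ₗ[K] E) : Prop where
  /-- `ε₂ⁱ = 0` for `i ∉ {0,1}`. -/
  e2_zero : ∀ i : ℤ, i ≠ 0 → i ≠ 1 → e2 i = 0
  /-- `ε₁` has degree `1`. -/
  e1_deg : ∀ (p : ℤ) (x : E), x ∈ G p → e1 x ∈ G (p + 1)
  /-- `ε₂ⁱ` has degree `-i`. -/
  e2_deg : ∀ (i p q : ℤ) (x y : E), x ∈ G p → y ∈ G q → e2 i x y ∈ G (p + q - i)
  /-- (R1) -/
  rel1 : ∀ (p : ℤ) (x : E), x ∈ G p → e1 (e1 x) = 0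
  /-- (R2) -/
  rel2 : ∀ (i : ℕ) (p q : ℤ) (x₁ x₂ : E), x₁ ∈ G p → x₂ ∈ G q →
    e1 (e2 (i : ℤ) x₁ x₂) =
      sgn K (i : ℤ) • (e2 (i : ℤ) (e1 x₁) x₂ + sgn K p • e2 (i : ℤ) x₁ (e1 x₂))
        + e2 ((i : ℤ) - 1) x₁ x₂ - sgn K ((i : ℤ) + p * q) • e2 ((i : ℤ) - 1) x₂ x₁
  /-- (R3) -/
  rel3 : ∀ (i : ℕ) (p q r : ℤ) (x₁ x₂ x₃ : E), x₁ ∈ G p → x₂ ∈ G q → x₃ ∈ G r →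
    e2 (i : ℤ) (e2 (i : ℤ) x₁ x₂) x₃ =
      sgn K ((i : ℤ) * (p + 1)) • e2 (i : ℤ) x₁ (e2 (i : ℤ) x₂ x₃)
        - sgn K ((p + (i : ℤ)) * q) • e2 (i : ℤ) x₂ (e2 (i : ℤ) x₁ x₃)
        - sgn K ((q + r) * p + ((i : ℤ) - 1) * q) •
            e2 ((i : ℤ) + 1) x₂ (e2 ((i : ℤ) - 1) x₃ x₁)
  /-- (R4) -/
  rel4 : ∀ (i j : ℕ), j < i → ∀ (p q r : ℤ) (x₁ x₂ x₃ : E),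
    x₁ ∈ G p → x₂ ∈ G q → x₃ ∈ G r →
    e2 (j : ℤ) (e2 (i : ℤ) x₁ x₂) x₃ =
      sgn K (1 + (j : ℤ) * ((i : ℤ) + 1) + p * (q + r) + ((j : ℤ) - 1) * q) •
        e2 ((i : ℤ) + 1) x₂ (e2 ((j : ℤ) - 1) x₃ x₁)
  /-- (R5) -/
  rel5 : ∀ (i j : ℕ), j < i → ∀ (p q r : ℤ) (x₁ x₂ x₃ : E),
    x₁ ∈ G p → x₂ ∈ G q → x₃ ∈ G r →
    e2 (i : ℤ) (e2 (j : ℤ) x₁ x₂) x₃ =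
      sgn K ((i : ℤ) * ((j : ℤ) + p)) • e2 (j : ℤ) x₁ (e2 (i : ℤ) x₂ x₃)
        - sgn K ((p + (j : ℤ)) * q) • e2 (i : ℤ) x₂ (e2 (j : ℤ) x₁ x₃)
        - sgn K ((j : ℤ) + r * ((j : ℤ) + q - 1) + p * (q + r)) •
            e2 ((i : ℤ) + 1) x₃ (e2 ((j : ℤ) - 1) x₂ x₁)

/-- A differential graded Lie algebra structure on a graded vector space. -/
structure IsDGLA (K : Type*) [Field K] {V : Type*} [AddCommGroup V] [Module K V]
    (G : ℤ → Submodule K V) (d : V →ₗ[K] V) (br : V →ₗ[K] V →ₗ[K] V) : Prop where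
  d_deg : ∀ (p : ℤ) (x : V), x ∈ G p → d x ∈ G (p + 1)
  d_sq : ∀ (p : ℤ) (x : V), x ∈ G p → d (d x) = 0
  br_deg : ∀ (p q : ℤ) (x y : V), x ∈ G p → y ∈ G q → br x y ∈ G (p + q)
  antisym : ∀ (p q : ℤ) (x y : V), x ∈ G p → y ∈ G q →
    br x y = - (sgn K (p * q) • br y x)
  jacobi : ∀ (p q r : ℤ) (x y z : V), x ∈ G p → y ∈ G q → z ∈ G r →
    br x (br y z) = br (br x y) z + sgn K (p * q) • br y (br x z)
  leibniz : ∀ (p q : ℤ) (x y : V), x ∈ G p → y ∈ G q →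
    d (br x y) = br (d x) y + sgn K p • br x (d y)

section Sign

variable (K : Type*) [Field K]

@[simp]
theorem sgn_zero : sgn K 0 = 1 := by
  simp [sgn]

theorem sgn_one : sgn K 1 = -1 := by
  simp [sgn, Int.negOnePow_one]

theorem sgn_one_add (n : ℤ) : sgn K (1 + n) = -sgn K n := by
  simp [sgn, add_comm 1 n, Int.negOnePow_succ]

end Sign

namespace IsHLie2

variable {K : Type*} [Field K] [CharZero K] {E : Type*} [AddCommGroup E] [Module K E]
  {G : ℤ → Submodule K E} {e1 : E →ₗ[K] E} {e2 : ℤ → E →ₗ[K] E →ₗ[K] E}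
  {p q r : ℤ} {x₁ x₂ x₃ : E}

theorem e1_eq_zero_of_eq_bot (hE : IsHLie2 K G e1 e2) (hG : G (p + 1) = ⊥) (hx : x₁ ∈ G p) :
    e1 x₁ = 0 := by
  simpa [hG] using hE.e1_deg p x₁ hx

theorem e2_two (hE : IsHLie2 K G e1 e2) : e2 2 = 0 :=
  hE.e2_zero 2 (by norm_num) (by norm_num)

theorem e1_e2_one (hE : IsHLie2 K G e1 e2) (hx₁ : x₁ ∈ G p) (hx₂ : x₂ ∈ G q) :
    e1 (e2 1 x₁ x₂) =
      e2 0 x₁ x₂ + sgn K (p * q) • e2 0 x₂ x₁ - (e2 1 (e1 x₁) x₂ + sgn K p • e2 1 x₁ (e1 x₂)) := by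
  have h := hE.rel2 1 p q x₁ x₂ hx₁ hx₂
  simp only [Nat.cast_one, sub_self] at h
  rw [h, sgn_one_add, sgn_one]
  module

theorem e2_zero_e2_one (hE : IsHLie2 K G e1 e2)
    (hx₁ : x₁ ∈ G p) (hx₂ : x₂ ∈ G q) (hx₃ : x₃ ∈ G r) :
    e2 0 (e2 1 x₁ x₂) x₃ = 0 := by
  simpa [hE.e2_two, one_add_one_eq_two] using hE.rel4 1 0 one_pos p q r x₁ x₂ x₃ hx₁ hx₂ hx₃

theorem e2_one_e2_zero (hE : IsHLie2 K G e1 e2)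
    (hx₁ : x₁ ∈ G p) (hx₂ : x₂ ∈ G q) (hx₃ : x₃ ∈ G r) :
    e2 1 (e2 0 x₁ x₂) x₃ = sgn K p • e2 0 x₁ (e2 1 x₂ x₃) - sgn K (p * q) • e2 1 x₂ (e2 0 x₁ x₃) := by
  simpa [hE.e2_two, one_add_one_eq_two] using hE.rel5 1 0 one_pos p q r x₁ x₂ x₃ hx₁ hx₂ hx₃

end IsHLie2

/-- In an hLie₂-algebra concentrated in non-positive degrees, for all `x, y, z ∈ 𝔈₀`:
`ε₁(ε₂¹(x, ε₂¹(y,z))) = ε₂¹(ε₂⁰(x,y), z) + ε₂¹(y, ε₂⁰(x,z)) − ε₂¹(x, ε₂⁰(y,z) + ε₂⁰(z,y))`. -/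
theorem hLie2_nonpos_alternator_identity
    (K : Type*) [Field K] [CharZero K] {E : Type*} [AddCommGroup E] [Module K E]
    (G : ℤ → Submodule K E) (e1 : E →ₗ[K] E) (e2 : ℤ → E →ₗ[K] E →ₗ[K] E)
    (hE : IsHLie2 K G e1 e2)
    (htrunc : ∀ k : ℤ, 0 < k → G k = ⊥) :
    ∀ x y z : E, x ∈ G 0 → y ∈ G 0 → z ∈ G 0 →
      e1 (e2 1 x (e2 1 y z)) =
        e2 1 (e2 0 x y) z + e2 1 y (e2 0 x z) - e2 1 x (e2 0 y z + e2 0 z y) := by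
  intro x y z hx hy hz
  have hG₁ : G (0 + 1) = ⊥ := htrunc _ one_pos
  have hyz : e2 1 y z ∈ G (-1) := by simpa using hE.e2_deg 1 0 0 y z hy hz
  rw [hE.e1_e2_one hx hyz, hE.e2_zero_e2_one hy hz hx, hE.e1_e2_one hy hz,
    hE.e1_eq_zero_of_eq_bot hG₁ hx, hE.e1_eq_zero_of_eq_bot hG₁ hy,
    hE.e1_eq_zero_of_eq_bot hG₁ hz, hE.e2_one_e2_zero hx hy hz]
  simp only [mul_zero, sgn_zero, one_smul, smul_zero, map_zero, LinearMap.zero_apply,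
    add_zero, zero_add, sub_zero, map_add]
  abel
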